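/- arXiv:math/0603112 — 3 statements merged into one kernel-verified Lean document; each statement's English description precedes it below -/
import Mathlib

section
/- The Bessel function of order zero admits the integral representation J₀(x) = (1/2π) ∫_{−π}^{π} e^{i x sin θ} dθ for every real x, where J₀ is defined by the power series J₀(x) = Σ_{j=0}^∞ ((−1)^j/(j!)²) (x/2)^{2j}. -/
/-!
Expanding `cos (x sin θ)` in its power series and integrating termwise reduces the claim to the
Wallis integrals `∫_{-π}^{π} sin^{2n} θ dθ = 2π C(2n, n) / 4ⁿ`; since `C(2n, n) / (2n)! = 1 / (n!)²`
this is exactly the series of `J₀`. The sine part of `e^{i x sin θ}` is odd in `θ` and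
integrates to zero.
-/

open Real intervalIntegral
open MeasureTheory (volume ae_of_all)
open scoped Nat

noncomputable def J0 (x : ℝ) : ℝ :=
  ∑' j : ℕ, ((-1 : ℝ) ^ j / ((Nat.factorial j : ℝ)) ^ 2) * (x / 2) ^ (2 * j)

section Symmetric

variable {E : Type*} [NormedAddCommGroup E] [NormedSpace ℝ E] {f : ℝ → E}

theorem Function.Odd.intervalIntegral_eq_zero (hf : Function.Odd f) (a : ℝ) :
    ∫ x in -a..a, f x = 0 := by
  have : IsAddTorsionFree E := .of_isTorsionFree ℝ E
  have h := integral_comp_neg (a := -a) (b := a) f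
  simp only [show ∀ x, f (-x) = -f x from hf, integral_neg, neg_neg] at h
  exact neg_eq_self.mp h

theorem Function.Even.intervalIntegral_eq_two_smul (hf : Function.Even f) {a : ℝ}
    (hfi : IntervalIntegrable f volume (-a) a) :
    ∫ x in -a..a, f x = (2 : ℝ) • ∫ x in 0..a, f x := by
  have h := integral_comp_neg (a := 0) (b := a) f
  simp only [show ∀ x, f (-x) = f x from hf, neg_zero] at h
  have h0 : (0 : ℝ) ∈ Set.uIcc (-a) a := by
    rcases le_total 0 a with ha | ha <;> simp [ha]
  rw [← integral_add_adjacent_intervals (hfi.mono_set (Set.uIcc_subset_uIcc_left h0))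
    (hfi.mono_set (Set.uIcc_subset_uIcc_right h0)), ← h, two_smul]

end Symmetric

theorem prod_range_odd_div_even_eq_centralBinom_div (n : ℕ) :
    ∏ i ∈ Finset.range n, (2 * (i : ℝ) + 1) / (2 * i + 2) = n.centralBinom / 4 ^ n := by
  induction n with
  | zero => simp
  | succ n ih =>
    have h : ((n + 1 : ℕ) : ℝ) * (n + 1).centralBinom = 2 * (2 * n + 1) * n.centralBinom := by
      exact_mod_cast Nat.succ_mul_centralBinom_succ n
    rw [Finset.prod_range_succ, ih]
    push_cast at h
    field_simp
    linear_combination (-2 * 4 ^ n : ℝ) * h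

theorem integral_neg_pi_pi_sin_pow_even (n : ℕ) :
    ∫ x in -π..π, sin x ^ (2 * n) = 2 * π * n.centralBinom / 4 ^ n := by
  have heven : Function.Even fun x => sin x ^ (2 * n) := fun x => by
    simp [sin_neg, (even_two_mul n).neg_pow]
  rw [heven.intervalIntegral_eq_two_smul (by apply Continuous.intervalIntegrable; fun_prop),
    integral_sin_pow_even, prod_range_odd_div_even_eq_centralBinom_div, smul_eq_mul]
  ring

theorem Nat.centralBinom_mul_factorial_sq (n : ℕ) : n.centralBinom * n ! ^ 2 = (2 * n)! := by
  rw [centralBinom_eq_two_mul_choose, sq, ← mul_assoc]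
  simpa [two_mul] using choose_mul_factorial_mul_factorial (n := 2 * n) (k := n) (by omega)

theorem hasSum_integral_cos_mul_sin (x : ℝ) :
    HasSum (fun n : ℕ => (-1) ^ n * x ^ (2 * n) / (2 * n)! * ∫ θ in -π..π, sin θ ^ (2 * n))
      (∫ θ in -π..π, cos (x * sin θ)) := by
  have hterm (n : ℕ) : ∫ θ in -π..π, (-1) ^ n * (x * sin θ) ^ (2 * n) / (2 * n)! =
      (-1) ^ n * x ^ (2 * n) / (2 * n)! * ∫ θ in -π..π, sin θ ^ (2 * n) := by
    rw [← integral_const_mul]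
    congr 1 with θ
    ring
  have hbound (n : ℕ) (θ : ℝ) :
      ‖(-1) ^ n * (x * sin θ) ^ (2 * n) / (2 * n)!‖ ≤ |x| ^ (2 * n) / (2 * n)! := by
    rw [norm_div, norm_mul, norm_pow, norm_pow, norm_neg, norm_one, one_pow, one_mul, norm_mul,
      mul_pow, Real.norm_natCast, Real.norm_eq_abs, Real.norm_eq_abs]
    gcongr
    exact mul_le_of_le_one_right (by positivity) (pow_le_one₀ (abs_nonneg _) (abs_sin_le_one θ))
  simpa only [hterm] using hasSum_integral_of_dominated_convergence (μ := volume) (a := -π) (b := π)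
    (F := fun n θ => (-1) ^ n * (x * sin θ) ^ (2 * n) / (2 * n)!)
    (fun n _ => |x| ^ (2 * n) / (2 * n)!)
    (fun n => (by fun_prop : Continuous _).aestronglyMeasurable)
    (fun n => ae_of_all _ fun θ _ => hbound n θ)
    (ae_of_all _ fun _ _ => (hasSum_cosh |x|).summable) intervalIntegrable_const
    (ae_of_all _ fun θ _ => hasSum_cos (x * sin θ))

theorem two_pi_mul_J0_eq_integral_cos (x : ℝ) :
    2 * π * J0 x = ∫ θ in -π..π, cos (x * sin θ) := by
  have hterm (n : ℕ) : (-1) ^ n * x ^ (2 * n) / (2 * n)! * ∫ θ in -π..π, sin θ ^ (2 * n) =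
      2 * π * ((-1) ^ n / (n ! : ℝ) ^ 2 * (x / 2) ^ (2 * n)) := by
    have h : (n.centralBinom : ℝ) * (n ! : ℝ) ^ 2 = (2 * n)! := by
      exact_mod_cast n.centralBinom_mul_factorial_sq
    have hC : (n.centralBinom : ℝ) ≠ 0 := mod_cast n.centralBinom_ne_zero
    rw [integral_neg_pi_pi_sin_pow_even, div_pow, pow_mul 2, ← h]
    field_simp
    norm_num
  rw [J0, ← tsum_mul_left, ← (hasSum_integral_cos_mul_sin x).tsum_eq]
  exact tsum_congr fun n => (hterm n).symm

theorem integral_exp_I_mul_sin_eq_integral_cos (x : ℝ) :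
    ∫ θ in -π..π, Complex.exp (Complex.I * x * sin θ) = ↑(∫ θ in -π..π, cos (x * sin θ)) := by
  have hodd : Function.Odd fun θ => sin (x * sin θ) := fun θ => by
    simp only [sin_neg, mul_neg]
  have hsplit (θ : ℝ) : Complex.exp (Complex.I * x * sin θ) =
      ↑(cos (x * sin θ)) + Complex.I * ↑(sin (x * sin θ)) := by
    rw [show Complex.I * x * sin θ = ↑(x * sin θ) * Complex.I by push_cast; ring,
      Complex.exp_mul_I]
    push_cast
    ring
  simp_rw [hsplit]
  rw [integral_add (by apply Continuous.intervalIntegrable; fun_prop)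
      (by apply Continuous.intervalIntegrable; fun_prop),
    integral_const_mul, integral_ofReal, integral_ofReal,
    hodd.intervalIntegral_eq_zero]
  simp

/-- Integral representation of the Bessel function of order zero:
`J₀(x) = (1/2π) ∫_{−π}^{π} e^{i x sin θ} dθ`. -/
theorem J0_integral_repr (x : ℝ) :
    (J0 x : ℂ) =
      (1 / (2 * (Real.pi : ℂ))) *
        ∫ θ in (-Real.pi)..Real.pi, Complex.exp (Complex.I * (x : ℂ) * (Real.sin θ : ℂ)) := by
  rw [integral_exp_I_mul_sin_eq_integral_cos, ← two_pi_mul_J0_eq_integral_cos]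
  push_cast
  field_simp
end

section
/- There exist constants C₁, C₂ > 0 such that for every n ≥ 1, C₁ n ≤ ‖e_n′‖_{L²(Θ)} ≤ C₂ n. -/
/-- The `L²(Θ)` norm of `J₀(z_n ·)`. -/
noncomputable def besselL2 (z : ℕ → ℝ) (n : ℕ) : ℝ :=
  Real.sqrt (2 * Real.pi * ∫ r in (0 : ℝ)..1, (J0 (z n * r)) ^ 2 * r)

/-- The radial derivative `e_n′(r) = z_n J₀′(z_n r)/‖J₀(z_n ·)‖_{L²(Θ)}`. -/
noncomputable def efun' (z : ℕ → ℝ) (n : ℕ) (r : ℝ) : ℝ :=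
  z n * deriv J0 (z n * r) / besselL2 z n

open Filter Set Real Topology Nat MeasureTheory

theorem hasDerivAt_tsum_mul_pow {c : ℕ → ℝ} {e : ℕ → ℕ} {y₀ : ℝ}
    (hc : Summable fun j => c j * y₀ ^ e j)
    (hc' : ∀ x, Summable fun j => ‖c j * e j * x ^ e j‖) (x : ℝ) :
    HasDerivAt (fun y => ∑' j, c j * y ^ e j) (∑' j, c j * e j * x ^ (e j - 1)) x := by
  set R := |x| + |y₀| + 1
  have hR : 1 ≤ R := by linarith [abs_nonneg x, abs_nonneg y₀]
  have hbound : ∀ j, ∀ y ∈ Metric.ball (0 : ℝ) R,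
      ‖c j * e j * y ^ (e j - 1)‖ ≤ ‖c j * e j * R ^ e j‖ := by
    intro j y hy
    rw [mem_ball_zero_iff] at hy
    simp only [norm_mul, norm_pow]
    gcongr
    calc ‖y‖ ^ (e j - 1) ≤ R ^ (e j - 1) := by gcongr
      _ ≤ R ^ e j := pow_le_pow_right₀ hR (Nat.sub_le _ _)
      _ = ‖R‖ ^ e j := by rw [Real.norm_of_nonneg (by linarith)]
  refine hasDerivAt_tsum_of_isPreconnected (hc' R) Metric.isOpen_ball
    (convex_ball _ _).isPreconnected (fun j y _ => ?_) hbound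
    (by simp only [mem_ball_zero_iff, norm_eq_abs, R]; linarith [abs_nonneg x]) hc
    (by simp only [mem_ball_zero_iff, norm_eq_abs, R]; linarith [abs_nonneg y₀])
  simpa [mul_assoc] using (hasDerivAt_pow (e j) y).const_mul (c j)

noncomputable def besselCoeff (j : ℕ) : ℝ := (-1) ^ j / ((j ! : ℝ) ^ 2 * 4 ^ j)

lemma abs_besselCoeff_le (j : ℕ) : |besselCoeff j| ≤ 1 / j ! := by
  have hj : (1 : ℝ) ≤ j ! := by exact_mod_cast j.factorial_pos
  rw [besselCoeff, abs_div, abs_pow, abs_neg, abs_one, one_pow,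
    abs_of_pos (by positivity)]
  gcongr
  calc (j ! : ℝ) = j ! * 1 * 1 := by ring
    _ ≤ j ! * j ! * 4 ^ j := by gcongr; exact one_le_pow₀ (by norm_num)
    _ = (j ! : ℝ) ^ 2 * 4 ^ j := by ring

lemma besselCoeff_succ (j : ℕ) : besselCoeff (j + 1) * (2 * (j + 1)) ^ 2 = -besselCoeff j := by
  rw [besselCoeff, besselCoeff, factorial_succ]
  push_cast
  field_simp
  ring

-- `(2j + 1)²` dominates the factors `1, 2j, 2j(2j - 1), (2j)²` of the differentiated series.
lemma summable_norm_besselCoeff_mul (x : ℝ) {m k : ℕ → ℕ} (hm : ∀ j, m j ≤ (2 * j + 1) ^ 2)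
    (hk : ∀ j, k j ≤ 2 * j) :
    Summable fun j => ‖besselCoeff j * m j * x ^ k j‖ := by
  have hm' (j : ℕ) : (m j : ℝ) ≤ (2 * j + 1) ^ 2 := by exact_mod_cast hm j
  refine .of_nonneg_of_le (fun _ => norm_nonneg _) (fun j => ?_)
    (Real.summable_pow_div_factorial (9 * (1 + |x|) ^ 2))
  have h3 : (2 * j + 1 : ℝ) ≤ 3 ^ j := by
    have := one_add_mul_le_pow (by norm_num : (-2 : ℝ) ≤ 2) j
    norm_num at this
    linarith
  have hx : |x| ^ k j ≤ ((1 + |x|) ^ 2) ^ j := by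
    rw [← pow_mul]
    calc |x| ^ k j ≤ (1 + |x|) ^ k j := by gcongr; linarith
      _ ≤ (1 + |x|) ^ (2 * j) := pow_le_pow_right₀ (by linarith [abs_nonneg x]) (hk j)
  calc ‖besselCoeff j * m j * x ^ k j‖ = |besselCoeff j| * m j * |x| ^ k j := by
        simp
    _ ≤ 1 / j ! * (3 ^ j) ^ 2 * ((1 + |x|) ^ 2) ^ j := by
        gcongr
        · exact abs_besselCoeff_le j
        · exact (hm' j).trans (by gcongr)
    _ = (9 * (1 + |x|) ^ 2) ^ j / j ! := by
        have h9 : (9 : ℝ) ^ j = (3 ^ j) ^ 2 := by rw [← pow_mul, mul_comm, pow_mul]; norm_num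
        rw [mul_pow, h9]
        ring

lemma J0_eq_tsum : J0 = fun x => ∑' j, besselCoeff j * x ^ (2 * j) := by
  ext x
  refine tsum_congr fun j => ?_
  rw [besselCoeff, div_pow, pow_mul 2, show (2 : ℝ) ^ 2 = 4 by norm_num]
  field_simp

lemma J0_zero : J0 0 = 1 := by
  simp only [J0_eq_tsum]
  rw [tsum_eq_single 0 fun j hj => by simp [hj]]
  simp [besselCoeff]

lemma hasDerivAt_J0_tsum (x : ℝ) :
    HasDerivAt J0 (∑' j, besselCoeff j * (2 * j : ℕ) * x ^ (2 * j - 1)) x := by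
  rw [J0_eq_tsum]
  refine hasDerivAt_tsum_mul_pow (y₀ := x) ?_ (fun x => ?_) x
  · simpa using (summable_norm_besselCoeff_mul x (m := 1) (k := (2 * ·))
      (fun j => Nat.one_le_pow _ _ (Nat.succ_pos _)) fun _ => le_rfl).of_norm
  · exact summable_norm_besselCoeff_mul x (fun j => by nlinarith) fun _ => le_rfl

lemma differentiable_J0 : Differentiable ℝ J0 :=
  fun x => (hasDerivAt_J0_tsum x).differentiableAt

lemma hasDerivAt_J0 (x : ℝ) : HasDerivAt J0 (deriv J0 x) x :=
  (differentiable_J0 x).hasDerivAt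

@[fun_prop]
lemma continuous_J0 : Continuous J0 := differentiable_J0.continuous

lemma deriv_J0 : deriv J0 = fun x => ∑' j, besselCoeff j * (2 * j : ℕ) * x ^ (2 * j - 1) :=
  funext fun x => (hasDerivAt_J0_tsum x).deriv

@[fun_prop]
lemma continuous_deriv_J0 : Continuous (deriv J0) := by
  rw [deriv_J0]
  refine continuous_iff_continuousAt.2 fun x =>
    (hasDerivAt_tsum_mul_pow (c := fun j => besselCoeff j * (2 * j : ℕ)) (e := (2 * · - 1))
      (y₀ := x) ?_ (fun x => ?_) x).continuousAt
  · exact (summable_norm_besselCoeff_mul x (fun j => by nlinarith) (fun j => by omega)).of_norm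
  · simpa [mul_assoc] using summable_norm_besselCoeff_mul x (m := fun j => 2 * j * (2 * j - 1))
      (k := (2 * · - 1)) (fun j => by rw [sq]; exact Nat.mul_le_mul (by omega) (by omega))
      fun j => by omega

lemma mul_deriv_J0_eq_tsum :
    (fun y => y * deriv J0 y) = fun y => ∑' j, besselCoeff j * (2 * j : ℕ) * y ^ (2 * j) := by
  ext y
  rw [deriv_J0, ← tsum_mul_left]
  refine tsum_congr fun j => ?_
  rcases j with _ | j
  · simp
  · rw [show 2 * (j + 1) = 2 * j + 1 + 1 by ring, pow_succ _ (2 * j + 1), Nat.add_sub_cancel]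
    ring

lemma hasDerivAt_mul_deriv_J0 (x : ℝ) :
    HasDerivAt (fun y => y * deriv J0 y) (-(x * J0 x)) x := by
  have hc : Summable fun j => besselCoeff j * (2 * j : ℕ) * x ^ (2 * j) :=
    (summable_norm_besselCoeff_mul x (fun j => by nlinarith) fun _ => le_rfl).of_norm
  have hc' (y : ℝ) :
      Summable fun j => ‖besselCoeff j * (2 * j : ℕ) * (2 * j : ℕ) * y ^ (2 * j)‖ := by
    simpa [mul_assoc] using summable_norm_besselCoeff_mul y (m := fun j => 2 * j * (2 * j))
      (k := (2 * ·)) (fun j => by nlinarith) fun _ => le_rfl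
  have hsum :
      Summable fun j => besselCoeff j * (2 * j : ℕ) * (2 * j : ℕ) * x ^ (2 * j - 1) := by
    simpa [mul_assoc] using (summable_norm_besselCoeff_mul x (m := fun j => 2 * j * (2 * j))
      (k := (2 * · - 1)) (fun j => by nlinarith) fun j => by omega).of_norm
  rw [mul_deriv_J0_eq_tsum]
  convert hasDerivAt_tsum_mul_pow hc hc' x using 1
  rw [hsum.tsum_eq_zero_add, J0_eq_tsum, ← tsum_mul_left, ← tsum_neg]
  simp only [mul_zero, Nat.cast_zero, zero_mul, zero_add]
  refine tsum_congr fun j => ?_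
  rw [show 2 * (j + 1) - 1 = 2 * j + 1 by omega]
  push_cast
  linear_combination (-x ^ (2 * j + 1)) * besselCoeff_succ j

lemma integral_deriv_J0_sq {c : ℝ} (hc : J0 c = 0) :
    ∫ r in (0 : ℝ)..1, (c * deriv J0 (c * r)) ^ 2 * r
      = c ^ 2 * ∫ r in (0 : ℝ)..1, J0 (c * r) ^ 2 * r := by
  have hG (r : ℝ) : HasDerivAt (fun r => J0 (c * r) * (c * r * deriv J0 (c * r)))
      ((c * deriv J0 (c * r)) ^ 2 * r - c ^ 2 * (J0 (c * r) ^ 2 * r)) r := by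
    have hcr : HasDerivAt (c * ·) c r := by simpa using (hasDerivAt_id r).const_mul c
    have hu := (hasDerivAt_J0 (c * r)).comp r hcr
    have hp := (hasDerivAt_mul_deriv_J0 (c * r)).comp r hcr
    refine (hu.mul hp).congr_deriv ?_
    simp only [Function.comp_apply]
    ring
  have hcont :
      Continuous fun r => (c * deriv J0 (c * r)) ^ 2 * r - c ^ 2 * (J0 (c * r) ^ 2 * r) := by
    fun_prop
  have hFTC := intervalIntegral.integral_eq_sub_of_hasDerivAt (fun r _ => hG r)
    (hcont.intervalIntegrable 0 1)
  rw [intervalIntegral.integral_sub ((by fun_prop : Continuous _).intervalIntegrable 0 1)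
      ((by fun_prop : Continuous _).intervalIntegrable 0 1),
    intervalIntegral.integral_const_mul] at hFTC
  simpa [hc, sub_eq_zero] using hFTC

lemma integral_sq_mul_id_pos {u : ℝ → ℝ} (hu : Continuous u) (hu0 : u 0 ≠ 0) :
    0 < ∫ r in (0 : ℝ)..1, u r ^ 2 * r := by
  obtain ⟨ε, hε, hne⟩ := Metric.eventually_nhds_iff.1 (hu.continuousAt.eventually_ne hu0)
  have hsupp : Ioo 0 (min ε 1) ⊆ Function.support (fun r => u r ^ 2 * r) ∩ Ioc 0 1 := by
    intro r ⟨hr0, hr1⟩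
    have hrε : dist r 0 < ε := by
      rw [Real.dist_eq, sub_zero, abs_of_pos hr0]
      exact hr1.trans_le (min_le_left _ _)
    exact ⟨mul_ne_zero (pow_ne_zero 2 (hne hrε)) hr0.ne', hr0, (hr1.trans_le (min_le_right _ _)).le⟩
  have hnonneg : 0 ≤ᵐ[volume.restrict (uIoc (0 : ℝ) 1)] fun r => u r ^ 2 * r := by
    rw [uIoc_of_le zero_le_one]
    exact (ae_restrict_iff' measurableSet_Ioc).2
      (.of_forall fun r hr => mul_nonneg (sq_nonneg _) hr.1.le)
  rw [intervalIntegral.integral_pos_iff_support_of_nonneg_ae' hnonneg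
    ((by fun_prop : Continuous _).intervalIntegrable 0 1)]
  exact ⟨zero_lt_one,
    ((Measure.measure_Ioo_pos _).2 (lt_min hε zero_lt_one)).trans_le (measure_mono hsupp)⟩

lemma sqrt_integral_efun'_sq {z : ℕ → ℝ} {n : ℕ} (hz : 0 < z n) (hJ : J0 (z n) = 0) :
    √(2 * π * ∫ r in (0 : ℝ)..1, efun' z n r ^ 2 * r) = z n := by
  have hI : 0 < ∫ r in (0 : ℝ)..1, J0 (z n * r) ^ 2 * r :=
    integral_sq_mul_id_pos (by fun_prop) (by simp [J0_zero])
  have hB : besselL2 z n ^ 2 = 2 * π * ∫ r in (0 : ℝ)..1, J0 (z n * r) ^ 2 * r :=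
    sq_sqrt (by positivity)
  have hefun : ∫ r in (0 : ℝ)..1, efun' z n r ^ 2 * r
      = (∫ r in (0 : ℝ)..1, (z n * deriv J0 (z n * r)) ^ 2 * r) / besselL2 z n ^ 2 := by
    rw [← intervalIntegral.integral_div]
    congr 1 with r
    rw [efun']
    ring
  rw [hefun, integral_deriv_J0_sq hJ, hB, mul_div_mul_comm, div_self hI.ne', mul_one,
    mul_div_cancel₀ _ (by positivity), sqrt_sq hz.le]

lemma HasDerivAt.nonpos_of_eventually_le_left {f : ℝ → ℝ} {f' x : ℝ} (hf : HasDerivAt f f' x)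
    (h : ∀ᶠ y in 𝓝[<] x, f x ≤ f y) : f' ≤ 0 := by
  refine le_of_tendsto ((hasDerivAt_iff_tendsto_slope.1 hf).mono_left (nhdsLT_le_nhdsNE x)) ?_
  filter_upwards [h, self_mem_nhdsWithin] with y hy hyx
  rw [slope_def_field]
  exact div_nonpos_of_nonneg_of_nonpos (sub_nonneg.2 hy) (sub_nonpos.2 (le_of_lt hyx))

def IsSturmSolution (q : ℝ → ℝ) (s : Set ℝ) (W W' : ℝ → ℝ) : Prop :=
  ∀ x ∈ s, HasDerivAt W (W' x) x ∧ HasDerivAt W' (-(q x * W x)) x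

namespace IsSturmSolution

variable {q W W' : ℝ → ℝ} {s t : Set ℝ} {a b ω : ℝ}

lemma mono (h : IsSturmSolution q s W W') (hts : t ⊆ s) : IsSturmSolution q t W W' :=
  fun x hx => h x (hts hx)

lemma neg (h : IsSturmSolution q s W W') : IsSturmSolution q s (-W) (-W') := fun x hx =>
  ⟨(h x hx).1.neg, (h x hx).2.neg.congr_deriv (by simp)⟩

lemma continuousOn (h : IsSturmSolution q s W W') : ContinuousOn W s :=
  fun x hx => (h x hx).1.continuousAt.continuousWithinAt

-- The Wronskian of `W` with `sin (ω (· - a))`, a solution of `W'' + ω² W = 0`.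
lemma hasDerivAt_wronskian_sin (h : IsSturmSolution q s W W') {x : ℝ} (hx : x ∈ s) :
    HasDerivAt (fun y => ω * W y * cos (ω * (y - a)) - W' y * sin (ω * (y - a)))
      ((q x - ω ^ 2) * W x * sin (ω * (x - a))) x := by
  have hθ : HasDerivAt (fun y => ω * (y - a)) ω x := by
    simpa using ((hasDerivAt_id x).sub_const a).const_mul ω
  refine ((((h x hx).1.const_mul ω).mul hθ.cos).sub ((h x hx).2.mul hθ.sin)).congr_deriv ?_
  ring

lemma exists_zero_Ioc (h : IsSturmSolution q (Icc a (a + π / ω)) W W') (hω : 0 < ω)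
    (hq : ∀ x ∈ Ioo a (a + π / ω), ω ^ 2 ≤ q x) : ∃ x ∈ Ioc a (a + π / ω), W x = 0 := by
  by_contra! hne
  wlog hpos : ∀ x ∈ Ioc a (a + π / ω), 0 < W x generalizing W W'
  · rcases isPreconnected_Ioc.mapsTo_Ioi_or_Iio (h.continuousOn.mono Ioc_subset_Icc_self) hne
      with hW | hW
    · exact hpos hW
    · exact this h.neg (fun x hx => neg_ne_zero.2 (hne x hx)) fun x hx => neg_pos.2 (hW hx)
  set b := a + π / ω
  have hab : a < b := lt_add_of_pos_right a (by positivity)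
  have hωb : ω * (b - a) = π := by rw [add_sub_cancel_left]; field_simp
  set V := fun y => ω * W y * cos (ω * (y - a)) - W' y * sin (ω * (y - a))
  have hV : MonotoneOn V (Icc a b) := by
    refine monotoneOn_of_deriv_nonneg (convex_Icc a b)
      (fun x hx => (h.hasDerivAt_wronskian_sin hx).continuousAt.continuousWithinAt)
      (fun x hx => ?_) (fun x hx => ?_) <;> rw [interior_Icc] at hx
    · exact (h.hasDerivAt_wronskian_sin
        (Ioo_subset_Icc_self hx)).differentiableAt.differentiableWithinAt
    · rw [(h.hasDerivAt_wronskian_sin (Ioo_subset_Icc_self hx)).deriv]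
      have hsin : 0 < sin (ω * (x - a)) := sin_pos_of_pos_of_lt_pi
        (mul_pos hω (sub_pos.2 hx.1)) (hωb ▸ by gcongr; exact hx.2)
      exact mul_nonneg (mul_nonneg (sub_nonneg.2 (hq x hx)) (hpos x ⟨hx.1, hx.2.le⟩).le) hsin.le
  have hWa : 0 ≤ W a := ge_of_tendsto
    (((h a ⟨le_rfl, hab.le⟩).1.continuousAt.tendsto).mono_left nhdsWithin_le_nhds)
    (eventually_of_mem (Ioc_mem_nhdsGT hab) fun x hx => (hpos x hx).le)
  have hVab := hV ⟨le_rfl, hab.le⟩ ⟨hab.le, le_rfl⟩ hab.le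
  simp only [V, sub_self, mul_zero, cos_zero, sin_zero, hωb, cos_pi, sin_pi] at hVab
  nlinarith [hpos b ⟨hab, le_rfl⟩]

lemma div_le_sub (h : IsSturmSolution q (Icc a b) W W') (hω : 0 < ω) (hab : a < b)
    (hq : ∀ x ∈ Ioo a b, q x < ω ^ 2) (ha : W a = 0) (hb : W b = 0)
    (hne : ∀ x ∈ Ioo a b, W x ≠ 0) : π / ω ≤ b - a := by
  by_contra! hba
  wlog hpos : ∀ x ∈ Ioo a b, 0 < W x generalizing W W'
  · rcases isPreconnected_Ioo.mapsTo_Ioi_or_Iio (h.continuousOn.mono Ioo_subset_Icc_self) hne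
      with hW | hW
    · exact hpos hW
    · exact this h.neg (by simp [ha]) (by simp [hb]) (fun x hx => neg_ne_zero.2 (hne x hx))
        fun x hx => neg_pos.2 (hW hx)
  have hωb : ω * (b - a) < π := by rwa [lt_div_iff₀' hω] at hba
  have hsin {x : ℝ} (hx : x ∈ Ioc a b) : 0 < sin (ω * (x - a)) :=
    sin_pos_of_pos_of_lt_pi (mul_pos hω (sub_pos.2 hx.1))
      (lt_of_le_of_lt (by gcongr; exact hx.2) hωb)
  set V := fun y => ω * W y * cos (ω * (y - a)) - W' y * sin (ω * (y - a))
  have hV : StrictAntiOn V (Icc a b) := by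
    refine strictAntiOn_of_deriv_neg (convex_Icc a b)
      (fun x hx => (h.hasDerivAt_wronskian_sin hx).continuousAt.continuousWithinAt)
      fun x hx => ?_
    rw [interior_Icc] at hx
    rw [(h.hasDerivAt_wronskian_sin (Ioo_subset_Icc_self hx)).deriv]
    exact mul_neg_of_neg_of_pos (mul_neg_of_neg_of_pos (sub_neg.2 (hq x hx)) (hpos x hx))
      (hsin (Ioo_subset_Ioc_self hx))
  have hVab := hV ⟨le_rfl, hab.le⟩ ⟨hab.le, le_rfl⟩ hab
  simp only [V, sub_self, mul_zero, sin_zero, ha, hb, zero_mul] at hVab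
  have hW'b : W' b ≤ 0 := (h b ⟨hab.le, le_rfl⟩).1.nonpos_of_eventually_le_left
    (eventually_of_mem (Ioo_mem_nhdsLT hab) fun x hx => hb ▸ (hpos x hx).le)
  nlinarith [hsin ⟨hab, le_rfl⟩]

end IsSturmSolution

lemma isSturmSolution_sqrt_mul_J0 :
    IsSturmSolution (fun x => 1 + 1 / (4 * x ^ 2)) (Ioi 0) (fun x => √x * J0 x)
      (fun x => (J0 x / 2 + x * deriv J0 x) / √x) := by
  intro x (hx : 0 < x)
  have hsx : √x ^ 2 = x := sq_sqrt (le_of_lt hx)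
  have hs0 : √x ≠ 0 := sqrt_ne_zero'.2 hx
  have hsqrt := hasDerivAt_sqrt (ne_of_gt hx)
  constructor
  · refine (hsqrt.mul (hasDerivAt_J0 x)).congr_deriv ?_
    field_simp
    rw [hsx]
    ring
  · have hnum := ((hasDerivAt_J0 x).div_const 2).add (hasDerivAt_mul_deriv_J0 x)
    refine (hnum.div hsqrt hs0).congr_deriv ?_
    simp only [Pi.add_apply]
    field_simp
    rw [show √x ^ 4 = (√x ^ 2) ^ 2 by ring, hsx]
    ring

lemma exists_J0_eq_zero_Ioc {a : ℝ} (ha : 0 < a) : ∃ x ∈ Ioc a (a + π), J0 x = 0 := by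
  have h : IsSturmSolution _ (Icc a (a + π / 1)) _ _ :=
    isSturmSolution_sqrt_mul_J0.mono fun x hx => ha.trans_le hx.1
  obtain ⟨x, hx, hwx⟩ := h.exists_zero_Ioc one_pos fun x _ => by
    simp only [one_pow, le_add_iff_nonneg_right]; positivity
  rw [div_one] at hx
  exact ⟨x, hx, (mul_eq_zero.1 hwx).resolve_left (sqrt_ne_zero'.2 (ha.trans hx.1))⟩

lemma div_le_sub_of_J0_eq_zero {x₀ a b : ℝ} (hx₀ : 0 < x₀) (ha : x₀ ≤ a) (hab : a < b)
    (hJa : J0 a = 0) (hJb : J0 b = 0) (hne : ∀ x ∈ Ioo a b, J0 x ≠ 0) :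
    π / √(1 + 1 / (4 * x₀ ^ 2)) ≤ b - a := by
  have hpos {x : ℝ} (hx : a < x) : 0 < x := hx₀.trans_le ha |>.trans hx
  have h : IsSturmSolution _ (Icc a b) _ _ :=
    isSturmSolution_sqrt_mul_J0.mono fun x hx => (hx₀.trans_le (ha.trans hx.1))
  refine h.div_le_sub (by positivity) hab (fun x hx => ?_) (by simp [hJa]) (by simp [hJb])
    fun x hx => mul_ne_zero (sqrt_ne_zero'.2 (hpos hx.1)) (hne x hx)
  rw [sq_sqrt (by positivity), add_lt_add_iff_left]
  gcongr
  exact ha.trans_lt hx.1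

lemma le_add_mul_of_succ_le_add {f : ℕ → ℝ} {d : ℝ} (h : ∀ n, 1 ≤ n → f (n + 1) ≤ f n + d)
    {n : ℕ} (hn : 1 ≤ n) : f n ≤ f 1 + (n - 1) * d := by
  induction n, hn using Nat.le_induction with
  | base => simp
  | succ n hn ih => push_cast; linarith [h n hn]

lemma J0_zeros_succ_le_add_pi {z : ℕ → ℝ} (hz : StrictMonoOn z (Ici 1))
    (hzpos : ∀ n, 1 ≤ n → 0 < z n) (hzall : ∀ x : ℝ, 0 < x → J0 x = 0 → ∃ n, 1 ≤ n ∧ z n = x)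
    {n : ℕ} (hn : 1 ≤ n) : z (n + 1) ≤ z n + π := by
  obtain ⟨x, hx, hJx⟩ := exists_J0_eq_zero_Ioc (hzpos n hn)
  obtain ⟨m, hm, rfl⟩ := hzall x ((hzpos n hn).trans hx.1) hJx
  have hnm : n < m := (hz.lt_iff_lt hn hm).1 hx.1
  exact ((hz.le_iff_le (by simp) hm).2 hnm).trans hx.2

lemma J0_zeros_add_le_succ {z : ℕ → ℝ} (hz : StrictMonoOn z (Ici 1))
    (hzpos : ∀ n, 1 ≤ n → 0 < z n) (hzzero : ∀ n, 1 ≤ n → J0 (z n) = 0)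
    (hzall : ∀ x : ℝ, 0 < x → J0 x = 0 → ∃ n, 1 ≤ n ∧ z n = x) {n : ℕ} (hn : 1 ≤ n) :
    z n + π / √(1 + 1 / (4 * z 1 ^ 2)) ≤ z (n + 1) := by
  have hne : ∀ x ∈ Ioo (z n) (z (n + 1)), J0 x ≠ 0 := by
    rintro x ⟨hx1, hx2⟩ hJx
    obtain ⟨m, hm, rfl⟩ := hzall x ((hzpos n hn).trans hx1) hJx
    have := (hz.lt_iff_lt hn hm).1 hx1
    have := (hz.lt_iff_lt hm (by simp)).1 hx2
    omega
  have := div_le_sub_of_J0_eq_zero (hzpos 1 le_rfl) ((hz.le_iff_le self_mem_Ici hn).2 hn)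
    (hz hn (by simp) (lt_add_one n)) (hzzero n hn) (hzzero _ (by omega)) hne
  linarith

/-- Two-sided bound `C₁ n ≤ ‖e_n′‖_{L²(Θ)} ≤ C₂ n`. -/
theorem eigenfunction_deriv_L2_equiv
    (z : ℕ → ℝ)
    (hzpos : ∀ n, 1 ≤ n → 0 < z n)
    (hzmono : ∀ m n, 1 ≤ m → m < n → z m < z n)
    (hzzero : ∀ n, 1 ≤ n → J0 (z n) = 0)
    (hzall : ∀ x : ℝ, 0 < x → J0 x = 0 → ∃ n, 1 ≤ n ∧ z n = x) :
    ∃ C₁ : ℝ, 0 < C₁ ∧ ∃ C₂ : ℝ, 0 < C₂ ∧ ∀ n : ℕ, 1 ≤ n →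
      C₁ * (n : ℝ) ≤ Real.sqrt (2 * Real.pi * ∫ r in (0 : ℝ)..1, (efun' z n r) ^ 2 * r) ∧
      Real.sqrt (2 * Real.pi * ∫ r in (0 : ℝ)..1, (efun' z n r) ^ 2 * r) ≤ C₂ * (n : ℝ) := by
  have hz : StrictMonoOn z (Ici 1) := fun m hm n _ hmn => hzmono m n hm hmn
  have hz1 : 0 < z 1 := hzpos 1 le_rfl
  set δ := π / √(1 + 1 / (4 * z 1 ^ 2))
  have hδ : 0 < δ := by positivity
  refine ⟨min (z 1) δ, lt_min hz1 hδ, z 1 + π, by positivity, fun n hn => ?_⟩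
  rw [sqrt_integral_efun'_sq (hzpos n hn) (hzzero n hn)]
  have hn' : (1 : ℝ) ≤ n := by exact_mod_cast hn
  have hlower := le_add_mul_of_succ_le_add (f := (- z ·)) (d := -δ)
    (fun k hk => by linarith [J0_zeros_add_le_succ hz hzpos hzzero hzall hk]) hn
  have hupper :=
    le_add_mul_of_succ_le_add (fun k hk => J0_zeros_succ_le_add_pi hz hzpos hzall hk) hn
  constructor
  · nlinarith [min_le_left (z 1) δ, min_le_right (z 1) δ]
  · nlinarith [pi_pos]
end

section
/- For every ε > 0 there exists C_ε > 0 such that for every integer l ≥ 0 and all real numbers N₁, N₂ ≥ 1, the number of pairs of positive integers (n₁, n₂) with (4n₁ − 1)² + (4n₂ − 1)² = l, n₁ ≤ N₁ and n₂ ≤ N₂ is at most C_ε (min(N₁, N₂))^ε. -/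
/-!
Put `a = 4n₁ - 1` and `b = 4n₂ - 1`: the pairs counted are lattice points on the circle
`a² + b² = l` with `0 < a ≤ 4N₁` and `0 < b ≤ 4N₂`. Let `M = min N₁ N₂`.

If `l ≤ (8M)⁶`, bound them by the number `r(l)` of representations of `l` as a sum of two
positive squares. Grouping these by `g = gcd a b`, a primitive representation of `m = l / g²` is
determined by the square root `a / b` of `-1` modulo `m`, and there are at most `d(m)` such roots
by the Chinese remainder theorem. Hence `r(l) ≤ d(l)² = O(l ^ (ε / 6)) = O(M ^ ε)` by the
divisor bound.

If `l > (8M)⁶`, all points lie on an arc where one coordinate is at most `4M`, and such a short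
arc of so large a circle holds at most two lattice points (Jarník): three of them would span a
lattice triangle, whose doubled area is a nonzero integer, while the curvature of the arc makes
it smaller than `1`.
-/

open Finset

lemma Finset.exists_lt_lt_of_two_lt_card {α : Type*} [LinearOrder α] {s : Finset α}
    (hs : 2 < #s) : ∃ a ∈ s, ∃ b ∈ s, ∃ c ∈ s, a < b ∧ b < c := by
  obtain ⟨t, hts, ht⟩ := exists_subset_card_eq hs
  have hmem (i : Fin 3) : t.orderEmbOfFin ht i ∈ s := hts (t.orderEmbOfFin_mem ht i)
  exact ⟨_, hmem 0, _, hmem 1, _, hmem 2, (t.orderEmbOfFin ht).strictMono (by decide),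
    (t.orderEmbOfFin ht).strictMono (by decide)⟩

namespace Nat

open Real

lemma add_one_le_two_mul_pow_rpow_inv {x : ℝ} (hx : 2 ≤ x) (e : ℕ) {k : ℕ} (hk : 0 < k) :
    (e : ℝ) + 1 ≤ 2 * k * (x ^ e) ^ (k : ℝ)⁻¹ := by
  set t : ℝ := e * (k : ℝ)⁻¹
  have h2x : (2 : ℝ) ^ t ≤ (x ^ e) ^ (k : ℝ)⁻¹ := by
    rw [← rpow_natCast, ← rpow_mul (by linarith)]
    exact rpow_le_rpow (by norm_num) hx (by positivity)
  have hexp : 1 + t * Real.log 2 ≤ (2 : ℝ) ^ t := by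
    rw [rpow_def_of_pos (by norm_num), mul_comm]
    exact add_one_le_exp _ |>.trans' (by linarith)
  have hlog : (1 : ℝ) / 2 < Real.log 2 := by linarith [log_two_gt_d9]
  have hkt : (k : ℝ) * t = e := by simp only [t]; field_simp
  have hk1 : (1 : ℝ) ≤ k := by exact_mod_cast hk
  calc (e : ℝ) + 1 ≤ 2 * k * (1 + t * Real.log 2) := by nlinarith [hlog, hkt]
    _ ≤ 2 * k * (x ^ e) ^ (k : ℝ)⁻¹ := by gcongr; exact hexp.trans h2x

lemma add_one_le_pow_rpow_inv {x : ℝ} {k : ℕ} (hk : 0 < k) (hx : 2 ^ k ≤ x) (e : ℕ) :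
    (e : ℝ) + 1 ≤ (x ^ e) ^ (k : ℝ)⁻¹ :=
  calc (e : ℝ) + 1 ≤ 2 ^ e := by exact_mod_cast Nat.lt_two_pow_self
    _ = (((2 : ℝ) ^ e) ^ k) ^ (k : ℝ)⁻¹ := (pow_rpow_inv_natCast (by positivity) hk.ne').symm
    _ ≤ (x ^ e) ^ (k : ℝ)⁻¹ := by
      rw [← pow_mul, mul_comm, pow_mul]
      gcongr

lemma card_divisors_le_mul_rpow_inv {k : ℕ} (hk : 0 < k) (n : ℕ) :
    (#n.divisors : ℝ) ≤ (2 * k) ^ 2 ^ k * (n : ℝ) ^ (k : ℝ)⁻¹ := by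
  rcases eq_or_ne n 0 with rfl | hn
  · simp only [divisors_zero, card_empty, CharP.cast_eq_zero]; positivity
  classical
  set c : ℕ → ℝ := fun p => if p < 2 ^ k then 2 * k else 1
  have h2k : (1 : ℝ) ≤ 2 * k := by
    have : (1 : ℝ) ≤ k := by exact_mod_cast hk
    linarith
  have hfactor (p : ℕ) (hp : p ∈ n.primeFactors) :
      (n.factorization p : ℝ) + 1 ≤ c p * ((p : ℝ) ^ n.factorization p) ^ (k : ℝ)⁻¹ := by
    have hp2 : (2 : ℝ) ≤ p := by exact_mod_cast (prime_of_mem_primeFactors hp).two_le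
    by_cases hpk : p < 2 ^ k
    · simpa [c, hpk] using add_one_le_two_mul_pow_rpow_inv hp2 _ hk
    · simpa [c, hpk] using add_one_le_pow_rpow_inv hk (by exact_mod_cast not_lt.1 hpk) _
  have hc : ∏ p ∈ n.primeFactors, c p ≤ (2 * k) ^ 2 ^ k := by
    rw [prod_ite, prod_const_one, mul_one, prod_const]
    refine pow_le_pow_right₀ h2k ((card_le_card fun p hp => ?_).trans (card_range _).le)
    exact mem_range.2 (mem_filter.1 hp).2
  have hn' : (n : ℝ) = ∏ p ∈ n.primeFactors, (p : ℝ) ^ n.factorization p := by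
    exact_mod_cast (prod_factorization_pow_eq_self hn).symm
  calc (#n.divisors : ℝ) = ∏ p ∈ n.primeFactors, ((n.factorization p : ℝ) + 1) := by
        rw [card_divisors hn]; push_cast; rfl
    _ ≤ ∏ p ∈ n.primeFactors, c p * ((p : ℝ) ^ n.factorization p) ^ (k : ℝ)⁻¹ :=
        prod_le_prod (fun _ _ => by positivity) hfactor
    _ = (∏ p ∈ n.primeFactors, c p) * (n : ℝ) ^ (k : ℝ)⁻¹ := by
        rw [prod_mul_distrib, hn', finsetProd_rpow _ _ fun _ _ => by positivity]
    _ ≤ (2 * k) ^ 2 ^ k * (n : ℝ) ^ (k : ℝ)⁻¹ := by gcongr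

theorem exists_card_divisors_le_mul_rpow {δ : ℝ} (hδ : 0 < δ) :
    ∃ C : ℝ, 0 < C ∧ ∀ n : ℕ, (#n.divisors : ℝ) ≤ C * (n : ℝ) ^ δ := by
  obtain ⟨k, hk⟩ := exists_nat_gt δ⁻¹
  have hk0 : 0 < k := by exact_mod_cast (inv_pos.2 hδ).trans hk
  refine ⟨(2 * k) ^ 2 ^ k, by positivity, fun n => ?_⟩
  rcases eq_or_ne n 0 with rfl | hn
  · simp only [divisors_zero, card_empty, CharP.cast_eq_zero]; positivity
  calc (#n.divisors : ℝ) ≤ (2 * k) ^ 2 ^ k * (n : ℝ) ^ (k : ℝ)⁻¹ :=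
        card_divisors_le_mul_rpow_inv hk0 n
    _ ≤ (2 * k) ^ 2 ^ k * (n : ℝ) ^ δ := by
        gcongr
        · exact_mod_cast one_le_iff_ne_zero.2 hn
        · exact inv_le_of_inv_le₀ hδ hk.le

end Nat

namespace ZMod

lemma eq_or_eq_neg_of_sq_eq_neg_one {p : ℕ} (hp : p.Prime) (hp2 : p ≠ 2) (n : ℕ)
    {x y : ZMod (p ^ n)} (hx : x ^ 2 = -1) (hy : y ^ 2 = -1) : y = x ∨ y = -x := by
  rcases Nat.eq_zero_or_pos n with rfl | hn
  · exact Or.inl (Subsingleton.elim (α := ZMod 1) _ _)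
  obtain ⟨X, rfl⟩ := ZMod.intCast_surjective x
  obtain ⟨Y, rfl⟩ := ZMod.intCast_surjective y
  have hpZ : Prime (p : ℤ) := Nat.prime_iff_prime_int.1 hp
  have hdvd (Z : ℤ) (hZ : (Z : ZMod (p ^ n)) ^ 2 = -1) : (p : ℤ) ^ n ∣ Z ^ 2 + 1 := by
    exact_mod_cast (intCast_zmod_eq_zero_iff_dvd _ _).1 (by push_cast; rw [hZ]; ring)
  have hprod : (p : ℤ) ^ n ∣ (Y - X) * (Y + X) := by
    have := dvd_sub (hdvd Y hy) (hdvd X hx)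
    rwa [show Y ^ 2 + 1 - (X ^ 2 + 1) = (Y - X) * (Y + X) by ring] at this
  -- `p` cannot divide both factors: it would divide `2 * Y`, hence `Y`, hence `Y ^ 2 + 1 - Y ^ 2`.
  have hnot : ¬ ((p : ℤ) ∣ Y - X ∧ (p : ℤ) ∣ Y + X) := by
    rintro ⟨h₁, h₂⟩
    have h2Y : (p : ℤ) ∣ 2 * Y := by simpa [two_mul] using dvd_add h₁ h₂
    rcases hpZ.dvd_or_dvd h2Y with h | h
    · exact hp2 ((Nat.prime_dvd_prime_iff_eq hp Nat.prime_two).1 (by exact_mod_cast h))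
    · have hY : (p : ℤ) ∣ Y ^ 2 + 1 := (dvd_pow_self _ hn.ne').trans (hdvd Y hy)
      have h1 : (p : ℤ) ∣ 1 := by simpa using dvd_sub hY (dvd_pow h two_ne_zero)
      exact hpZ.not_dvd_one h1
  rcases not_and_or.1 hnot with h | h
  · right
    rw [← Int.cast_neg, intCast_eq_intCast_iff_dvd_sub, show -X - Y = -(Y + X) by ring, dvd_neg]
    exact_mod_cast hpZ.pow_dvd_of_dvd_mul_left n h hprod
  · left
    rw [intCast_eq_intCast_iff_dvd_sub, show X - Y = -(Y - X) by ring, dvd_neg]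
    exact_mod_cast hpZ.pow_dvd_of_dvd_mul_right n h hprod

lemma ncard_sq_eq_neg_one_le_two {p : ℕ} (hp : p.Prime) (n : ℕ) :
    {x : ZMod (p ^ n) | x ^ 2 = -1}.ncard ≤ 2 := by
  by_cases hp2 : p = 2
  · subst hp2
    rcases le_or_gt n 1 with hn | hn
    · have : NeZero (2 ^ n) := ⟨by positivity⟩
      calc _ ≤ Nat.card (ZMod (2 ^ n)) := Set.ncard_le_card _
        _ ≤ 2 ^ 1 := by rw [Nat.card_zmod]; exact pow_le_pow_right₀ (by norm_num) hn
    -- `-1` is not a square modulo `4`.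
    have h4 : 4 ∣ 2 ^ n := pow_dvd_pow 2 hn
    have hempty : {x : ZMod (2 ^ n) | x ^ 2 = -1} = ∅ := by
      refine Set.eq_empty_of_forall_notMem fun x (hx : x ^ 2 = -1) => ?_
      have := congrArg (castHom h4 (ZMod 4)) hx
      rw [map_pow, map_neg, map_one] at this
      generalize castHom h4 (ZMod 4) x = y at this
      revert y; decide
    simp [hempty]
  rcases Set.eq_empty_or_nonempty {x : ZMod (p ^ n) | x ^ 2 = -1} with h | ⟨x, hx⟩
  · simp [h]
  calc _ ≤ ({x, -x} : Set (ZMod (p ^ n))).ncard :=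
        Set.ncard_le_ncard (fun _ hy => eq_or_eq_neg_of_sq_eq_neg_one hp hp2 n hx hy)
    _ ≤ 2 := (Set.ncard_insert_le _ _).trans (by simp)

lemma ncard_sq_eq_neg_one_le_card_divisors (m : ℕ) :
    {x : ZMod m | x ^ 2 = -1}.ncard ≤ #m.divisors := by
  induction m using Nat.recOnPosPrimePosCoprime with
  | zero =>
    have : {x : ZMod 0 | x ^ 2 = -1} = ∅ :=
      Set.eq_empty_of_forall_notMem fun (x : ℤ) (hx : x ^ 2 = -1) => by
        have : (0 : ℤ) ≤ x ^ 2 := sq_nonneg x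
        omega
    simp [this]
  | one => exact (Set.ncard_le_one_of_subsingleton _).trans (by simp)
  | prime_pow p n hp hn =>
    rw [Nat.divisors_prime_pow hp, card_map, card_range]
    exact (ncard_sq_eq_neg_one_le_two hp n).trans (by omega)
  | coprime a b ha hb hab iha ihb =>
    have : NeZero a := ⟨by omega⟩
    have : NeZero b := ⟨by omega⟩
    calc {x : ZMod (a * b) | x ^ 2 = -1}.ncard
        ≤ ({x : ZMod a | x ^ 2 = -1} ×ˢ {x : ZMod b | x ^ 2 = -1}).ncard := by
          refine Set.ncard_le_ncard_of_injOn (chineseRemainder hab) (fun x (hx : x ^ 2 = -1) => ?_)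
            (chineseRemainder hab).injective.injOn (Set.toFinite _)
          have := congrArg (chineseRemainder hab) hx
          rw [map_pow, map_neg, map_one, Prod.ext_iff] at this
          exact this
      _ = _ * _ := Set.ncard_prod
      _ ≤ #(a * b).divisors := by
          rw [Nat.Coprime.card_divisors_mul hab]; exact Nat.mul_le_mul iha ihb

lemma natCast_mul_inv_eq_one_of_sq_add_sq {m a b : ℕ} (hab : a.Coprime b)
    (hm : a ^ 2 + b ^ 2 = m) : (b : ZMod m) * (b : ZMod m)⁻¹ = 1 := by
  have hbm : b.Coprime m := by
    rw [← hm, sq b]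
    exact (Nat.coprime_add_mul_left_right _ _ _).2 (hab.symm.pow_right 2)
  exact mul_inv_of_unit _ ((isUnit_iff_coprime _ m).2 hbm)

lemma sq_natCast_mul_inv_eq_neg_one {m a b : ℕ} (hab : a.Coprime b)
    (hm : a ^ 2 + b ^ 2 = m) : ((a : ZMod m) * (b : ZMod m)⁻¹) ^ 2 = -1 := by
  have h0 : ((a ^ 2 + b ^ 2 : ℕ) : ZMod m) = 0 := by rw [hm, natCast_self]
  push_cast at h0
  linear_combination (b : ZMod m)⁻¹ ^ 2 * h0 -
    ((b : ZMod m) * (b : ZMod m)⁻¹ + 1) * natCast_mul_inv_eq_one_of_sq_add_sq hab hm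

end ZMod

def sqSumReps (l : ℕ) : Finset (ℕ × ℕ) :=
  (Icc 1 l ×ˢ Icc 1 l).filter fun p => p.1 ^ 2 + p.2 ^ 2 = l

lemma mem_sqSumReps {l : ℕ} {p : ℕ × ℕ} :
    p ∈ sqSumReps l ↔ 0 < p.1 ∧ 0 < p.2 ∧ p.1 ^ 2 + p.2 ^ 2 = l := by
  simp only [sqSumReps, mem_filter, mem_product, mem_Icc]
  constructor
  · rintro ⟨⟨⟨h₁, -⟩, h₂, -⟩, h⟩
    exact ⟨h₁, h₂, h⟩
  · rintro ⟨h₁, h₂, h⟩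
    have := Nat.le_self_pow two_ne_zero p.1
    have := Nat.le_self_pow two_ne_zero p.2
    exact ⟨⟨⟨h₁, by omega⟩, h₂, by omega⟩, h⟩

lemma card_sqSumReps_filter_coprime_le (m : ℕ) :
    #((sqSumReps m).filter fun p => p.1.Coprime p.2) ≤ {x : ZMod m | x ^ 2 = -1}.ncard := by
  rcases eq_or_ne m 0 with rfl | hm
  · simp [sqSumReps]
  have : NeZero m := ⟨hm⟩
  rw [← Set.ncard_coe_finset]
  refine Set.ncard_le_ncard_of_injOn (fun p => (p.1 : ZMod m) * (p.2 : ZMod m)⁻¹)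
    (fun p hp => ?_) (fun p hp q hq hpq => ?_) (Set.toFinite _)
  · obtain ⟨hp, hcop⟩ := mem_filter.1 hp
    exact ZMod.sq_natCast_mul_inv_eq_neg_one hcop (mem_sqSumReps.1 hp).2.2
  obtain ⟨hp, hpcop⟩ := mem_filter.1 hp
  obtain ⟨hq, hqcop⟩ := mem_filter.1 hq
  obtain ⟨hp₁, hp₂, hpsum⟩ := mem_sqSumReps.1 hp
  obtain ⟨hq₁, hq₂, hqsum⟩ := mem_sqSumReps.1 hq
  have hcross : ((p.1 * q.2 : ℕ) : ZMod m) = ((q.1 * p.2 : ℕ) : ZMod m) := by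
    push_cast
    linear_combination ((p.2 : ZMod m) * q.2) * hpq
      - (p.1 : ZMod m) * q.2 * ZMod.natCast_mul_inv_eq_one_of_sq_add_sq hpcop hpsum
      + (q.1 : ZMod m) * p.2 * ZMod.natCast_mul_inv_eq_one_of_sq_add_sq hqcop hqsum
  -- both cross products are below `m` by AM-GM, so the congruence is an equality
  have hcross' : p.1 * q.2 = q.1 * p.2 := by
    rwa [ZMod.natCast_eq_natCast_iff', Nat.mod_eq_of_lt (by nlinarith),
      Nat.mod_eq_of_lt (by nlinarith)] at hcross
  have h₂ : p.2 = q.2 := Nat.dvd_antisymm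
    (hpcop.symm.dvd_of_dvd_mul_left ⟨q.1, by rw [hcross']; ring⟩)
    (hqcop.symm.dvd_of_dvd_mul_left ⟨p.1, by rw [← hcross']; ring⟩)
  exact Prod.ext (Nat.eq_of_mul_eq_mul_right hq₂ (h₂ ▸ hcross')) h₂

lemma card_sqSumReps_filter_gcd_eq_le (l g : ℕ) :
    #((sqSumReps l).filter fun p => p.1.gcd p.2 = g) ≤
      #((sqSumReps (l / g ^ 2)).filter fun p => p.1.Coprime p.2) := by
  refine card_le_card_of_injOn (fun p => (p.1 / g, p.2 / g)) (fun p hp => ?_)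
    (fun p hp q hq h => ?_)
  · obtain ⟨hrep, rfl⟩ := mem_filter.1 hp
    obtain ⟨h₁, h₂, hsum⟩ := mem_sqSumReps.1 hrep
    have hg : 0 < p.1.gcd p.2 := Nat.gcd_pos_of_pos_left _ h₁
    have hsum' : (p.1 / p.1.gcd p.2) ^ 2 + (p.2 / p.1.gcd p.2) ^ 2 = l / p.1.gcd p.2 ^ 2 := by
      rw [← hsum, Nat.div_pow (Nat.gcd_dvd_left _ _), Nat.div_pow (Nat.gcd_dvd_right _ _),
        Nat.add_div_of_dvd_right (pow_dvd_pow_of_dvd (Nat.gcd_dvd_left _ _) 2)]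
    refine mem_filter.2 ⟨mem_sqSumReps.2 ⟨?_, ?_, hsum'⟩, Nat.coprime_div_gcd_div_gcd hg⟩
    · exact Nat.div_pos (Nat.gcd_le_left _ h₁) hg
    · exact Nat.div_pos (Nat.gcd_le_right _ h₂) hg
  · obtain ⟨-, rfl⟩ := mem_filter.1 hp
    obtain ⟨-, hq⟩ := mem_filter.1 hq
    obtain ⟨h₁, h₂⟩ := Prod.mk.inj h
    exact Prod.ext ((Nat.div_left_inj (Nat.gcd_dvd_left _ _) (hq ▸ Nat.gcd_dvd_left _ _)).1 h₁)
      ((Nat.div_left_inj (Nat.gcd_dvd_right _ _) (hq ▸ Nat.gcd_dvd_right _ _)).1 h₂)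

theorem card_sqSumReps_le (l : ℕ) : #(sqSumReps l) ≤ #l.divisors ^ 2 := by
  rcases eq_or_ne l 0 with rfl | hl
  · simp [sqSumReps]
  have himage : (sqSumReps l).image (fun p => p.1.gcd p.2) ⊆ l.divisors := by
    simp only [subset_iff, mem_image, Nat.mem_divisors, forall_exists_index, and_imp]
    rintro _ p hp rfl
    obtain ⟨-, -, hsum⟩ := mem_sqSumReps.1 hp
    exact ⟨hsum ▸ dvd_add ((Nat.gcd_dvd_left _ _).trans (dvd_pow_self _ two_ne_zero))
      ((Nat.gcd_dvd_right _ _).trans (dvd_pow_self _ two_ne_zero)), hl⟩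
  have hfiber : ∀ g ∈ (sqSumReps l).image (fun p => p.1.gcd p.2),
      #((sqSumReps l).filter fun p => p.1.gcd p.2 = g) ≤ #l.divisors := by
    simp only [mem_image, forall_exists_index, and_imp]
    rintro _ p hp rfl
    obtain ⟨-, -, hsum⟩ := mem_sqSumReps.1 hp
    have hdvd : p.1.gcd p.2 ^ 2 ∣ l := hsum ▸
      dvd_add (pow_dvd_pow_of_dvd (Nat.gcd_dvd_left _ _) 2)
        (pow_dvd_pow_of_dvd (Nat.gcd_dvd_right _ _) 2)
    calc _ ≤ #((sqSumReps (l / p.1.gcd p.2 ^ 2)).filter fun p => p.1.Coprime p.2) :=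
          card_sqSumReps_filter_gcd_eq_le _ _
      _ ≤ _ := card_sqSumReps_filter_coprime_le _
      _ ≤ #(l / p.1.gcd p.2 ^ 2).divisors := ZMod.ncard_sq_eq_neg_one_le_card_divisors _
      _ ≤ #l.divisors := card_le_card (Nat.divisors_subset_of_dvd hl (Nat.div_dvd_of_dvd hdvd))
  calc #(sqSumReps l) ≤ #l.divisors * #((sqSumReps l).image (fun p => p.1.gcd p.2)) :=
        card_le_mul_card_image _ _ hfiber
    _ ≤ #l.divisors * #l.divisors := by gcongr
    _ = #l.divisors ^ 2 := (sq _).symm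

theorem exists_card_sqSumReps_le_mul_rpow {δ : ℝ} (hδ : 0 < δ) :
    ∃ C : ℝ, 0 < C ∧ ∀ l : ℕ, (#(sqSumReps l) : ℝ) ≤ C * (l : ℝ) ^ δ := by
  obtain ⟨C, hC, hdiv⟩ := Nat.exists_card_divisors_le_mul_rpow (half_pos hδ)
  refine ⟨C ^ 2, by positivity, fun l => ?_⟩
  calc (#(sqSumReps l) : ℝ) ≤ (#l.divisors : ℝ) ^ 2 := by exact_mod_cast card_sqSumReps_le l
    _ ≤ (C * (l : ℝ) ^ (δ / 2)) ^ 2 := by gcongr; exact hdiv l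
    _ = C ^ 2 * (l : ℝ) ^ δ := by
      rw [mul_pow, ← Real.rpow_mul_natCast (by positivity)]
      norm_num

lemma add_le_two_mul_pow_three_of_sq_add_sq_eq {l a₁ a₂ a₃ b₁ b₂ b₃ : ℤ} (ha₁ : 0 < a₁)
    (h₁₂ : a₁ < a₂) (h₂₃ : a₂ < a₃) (hb₁ : 0 < b₁) (hb₂ : 0 < b₂) (hb₃ : 0 < b₃)
    (h₁ : a₁ ^ 2 + b₁ ^ 2 = l) (h₂ : a₂ ^ 2 + b₂ ^ 2 = l) (h₃ : a₃ ^ 2 + b₃ ^ 2 = l) :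
    b₁ + b₃ ≤ 2 * a₃ ^ 3 := by
  have hb₂₁ : b₂ < b₁ := by nlinarith
  have hb₃₂ : b₃ < b₂ := by nlinarith
  -- `D` is twice the signed area of the triangle spanned by the three points, a nonzero integer;
  -- `hD` bounds `|D|` by `2 * a₃ ^ 3 / (b₁ + b₃)`.
  set D := (a₂ - a₁) * (b₃ - b₁) - (a₃ - a₁) * (b₂ - b₁)
  set Q := (a₃ + a₁) * (b₂ + b₁) - (a₂ + a₁) * (b₃ + b₁)
  have hD : D * ((b₂ + b₁) * (b₃ + b₁)) = -((a₂ - a₁) * (a₃ - a₁) * Q) := by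
    linear_combination (a₂ - a₁) * (b₂ + b₁) * h₃ - (a₂ - a₁) * (b₂ + b₁) * h₁ -
      (a₃ - a₁) * (b₃ + b₁) * h₂ + (a₃ - a₁) * (b₃ + b₁) * h₁
  have hQ : 0 < Q := by nlinarith
  have hQle : Q ≤ 2 * a₃ * (b₂ + b₁) := by nlinarith
  have hP : 0 < (b₂ + b₁) * (b₃ + b₁) := mul_pos (by linarith) (by linarith)
  have hD1 : D ≤ -1 := by
    by_contra! h
    nlinarith [mul_pos (mul_pos (sub_pos.2 h₁₂) (sub_pos.2 (h₁₂.trans h₂₃))) hQ]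
  have hprod : (b₂ + b₁) * (b₃ + b₁) ≤ (b₂ + b₁) * (2 * a₃ ^ 3) := by
    calc (b₂ + b₁) * (b₃ + b₁) ≤ -D * ((b₂ + b₁) * (b₃ + b₁)) :=
          le_mul_of_one_le_left hP.le (by linarith)
      _ = (a₂ - a₁) * (a₃ - a₁) * Q := by linear_combination -hD
      _ ≤ a₃ * a₃ * (2 * a₃ * (b₂ + b₁)) := by
          gcongr <;> nlinarith
      _ = (b₂ + b₁) * (2 * a₃ ^ 3) := by ring
  linarith [le_of_mul_le_mul_left hprod (by linarith)]

lemma card_sqSumReps_filter_fst_le_two {l : ℕ} {A : ℝ} (hl : A ^ 2 + 4 * A ^ 6 < l) :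
    #((sqSumReps l).filter fun p => (p.1 : ℝ) ≤ A) ≤ 2 := by
  have hinj : Set.InjOn Prod.fst (sqSumReps l : Set (ℕ × ℕ)) := by
    intro p hp q hq h
    obtain ⟨-, -, hp⟩ := mem_sqSumReps.1 hp
    obtain ⟨-, -, hq⟩ := mem_sqSumReps.1 hq
    rw [h] at hp
    exact Prod.ext h (Nat.pow_left_injective two_ne_zero (show p.2 ^ 2 = q.2 ^ 2 by omega))
  rw [← card_image_of_injOn (hinj.mono (coe_subset.2 (filter_subset _ _)))]
  by_contra! h
  obtain ⟨_, h₁, _, h₂, _, h₃, h₁₂, h₂₃⟩ := exists_lt_lt_of_two_lt_card h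
  simp only [mem_image, mem_filter] at h₁ h₂ h₃
  obtain ⟨p₁, ⟨hp₁, -⟩, rfl⟩ := h₁
  obtain ⟨p₂, ⟨hp₂, -⟩, rfl⟩ := h₂
  obtain ⟨p₃, ⟨hp₃, hA⟩, rfl⟩ := h₃
  obtain ⟨ha₁, hb₁, e₁⟩ := mem_sqSumReps.1 hp₁
  obtain ⟨-, hb₂, e₂⟩ := mem_sqSumReps.1 hp₂
  obtain ⟨-, hb₃, e₃⟩ := mem_sqSumReps.1 hp₃
  have key : (p₁.2 : ℝ) + p₃.2 ≤ 2 * (p₃.1 : ℝ) ^ 3 := by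
    have := add_le_two_mul_pow_three_of_sq_add_sq_eq (l := l) (a₁ := p₁.1) (a₂ := p₂.1)
      (a₃ := p₃.1) (b₁ := p₁.2) (b₂ := p₂.2) (b₃ := p₃.2) (by exact_mod_cast ha₁)
      (by exact_mod_cast h₁₂) (by exact_mod_cast h₂₃) (by exact_mod_cast hb₁)
      (by exact_mod_cast hb₂) (by exact_mod_cast hb₃) (by exact_mod_cast e₁)
      (by exact_mod_cast e₂) (by exact_mod_cast e₃)
    exact_mod_cast this
  have ha₁A : (p₁.1 : ℝ) ≤ A := by
    have : (p₁.1 : ℝ) < p₃.1 := by exact_mod_cast h₁₂.trans h₂₃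
    linarith
  have hb₁A : (p₁.2 : ℝ) < 2 * A ^ 3 := by
    have : (1 : ℝ) ≤ p₃.2 := by exact_mod_cast hb₃
    have : (p₃.1 : ℝ) ^ 3 ≤ A ^ 3 := by gcongr
    linarith
  have hl' : (l : ℝ) = (p₁.1 : ℝ) ^ 2 + (p₁.2 : ℝ) ^ 2 := by exact_mod_cast e₁.symm
  have : (0 : ℝ) < p₁.1 := by exact_mod_cast ha₁
  have : (0 : ℝ) < p₁.2 := by exact_mod_cast hb₁
  nlinarith

lemma card_sqSumReps_filter_le_two {l : ℕ} {A B : ℝ} (hl : min A B ^ 2 + 4 * min A B ^ 6 < l) :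
    #((sqSumReps l).filter fun p => (p.1 : ℝ) ≤ A ∧ (p.2 : ℝ) ≤ B) ≤ 2 := by
  rcases le_total A B with h | h
  · rw [min_eq_left h] at hl
    refine (card_le_card fun p hp => ?_).trans (card_sqSumReps_filter_fst_le_two hl)
    exact mem_filter.2 ⟨(mem_filter.1 hp).1, (mem_filter.1 hp).2.1⟩
  · rw [min_eq_right h] at hl
    refine (card_le_card_of_injOn Prod.swap (fun p hp => ?_) Prod.swap_injective.injOn).trans
      (card_sqSumReps_filter_fst_le_two hl)
    simp only [coe_filter, Set.mem_ofPred_eq, mem_sqSumReps, Prod.fst_swap, Prod.snd_swap] at hp ⊢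
    exact ⟨⟨hp.1.2.1, hp.1.1, by rw [← hp.1.2.2, add_comm]⟩, hp.2.2⟩

lemma ncard_le_card_sqSumReps_filter (l : ℕ) (N₁ N₂ : ℝ) :
    {p : ℕ × ℕ | 1 ≤ p.1 ∧ 1 ≤ p.2 ∧
      (4 * (p.1 : ℤ) - 1) ^ 2 + (4 * (p.2 : ℤ) - 1) ^ 2 = (l : ℤ) ∧
      (p.1 : ℝ) ≤ N₁ ∧ (p.2 : ℝ) ≤ N₂}.ncard ≤
    #((sqSumReps l).filter fun p => (p.1 : ℝ) ≤ 4 * N₁ ∧ (p.2 : ℝ) ≤ 4 * N₂) := by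
  rw [← Set.ncard_coe_finset]
  refine Set.ncard_le_ncard_of_injOn (fun p => (4 * p.1 - 1, 4 * p.2 - 1)) ?_ ?_ (Set.toFinite _)
  · rintro p ⟨h₁, h₂, hsum, hN₁, hN₂⟩
    have c₁ : ((4 * p.1 - 1 : ℕ) : ℤ) = 4 * p.1 - 1 := by omega
    have c₂ : ((4 * p.2 - 1 : ℕ) : ℤ) = 4 * p.2 - 1 := by omega
    simp only [coe_filter, Set.mem_ofPred_eq, mem_sqSumReps]
    refine ⟨⟨by omega, by omega, by zify; rw [c₁, c₂]; exact hsum⟩, ?_, ?_⟩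
    · have : ((4 * p.1 - 1 : ℕ) : ℝ) ≤ 4 * p.1 := by exact_mod_cast Nat.sub_le _ _
      linarith
    · have : ((4 * p.2 - 1 : ℕ) : ℝ) ≤ 4 * p.2 := by exact_mod_cast Nat.sub_le _ _
      linarith
  · rintro p ⟨h₁, -⟩ q ⟨h₁', -⟩ h
    simp only [Prod.mk.injEq] at h
    ext <;> omega

/-- Divisor-type bound: for every `ε > 0` there is `C_ε` such that for every integer
`l ≥ 0` and all reals `N₁, N₂ ≥ 1`, the number of pairs of positive integers
`(n₁, n₂)` with `(4n₁−1)² + (4n₂−1)² = l`, `n₁ ≤ N₁`, `n₂ ≤ N₂` is at most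
`C_ε (min(N₁,N₂))^ε`. -/
theorem lattice_point_count_bound :
    ∀ ε : ℝ, 0 < ε → ∃ C : ℝ, 0 < C ∧
      ∀ (l : ℕ) (N₁ N₂ : ℝ), 1 ≤ N₁ → 1 ≤ N₂ →
        ((Set.ncard {p : ℕ × ℕ | 1 ≤ p.1 ∧ 1 ≤ p.2 ∧
            (4 * (p.1 : ℤ) - 1) ^ 2 + (4 * (p.2 : ℤ) - 1) ^ 2 = (l : ℤ) ∧
            (p.1 : ℝ) ≤ N₁ ∧ (p.2 : ℝ) ≤ N₂} : ℕ) : ℝ) ≤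
          C * (min N₁ N₂) ^ ε := by
  intro ε hε
  obtain ⟨C, hC, hreps⟩ := exists_card_sqSumReps_le_mul_rpow (δ := ε / 6) (by positivity)
  refine ⟨C * 8 ^ ε + 2, by positivity, fun l N₁ N₂ hN₁ hN₂ => ?_⟩
  have hM : 1 ≤ min N₁ N₂ := le_min hN₁ hN₂
  have hMε : 1 ≤ min N₁ N₂ ^ ε := Real.one_le_rpow hM hε.le
  have hC8 : 0 < C * 8 ^ ε := by positivity
  refine (Nat.cast_le.2 (ncard_le_card_sqSumReps_filter l N₁ N₂)).trans ?_
  rcases le_or_gt (l : ℝ) ((8 * min N₁ N₂) ^ 6) with hl | hl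
  · calc _ ≤ (#(sqSumReps l) : ℝ) := by exact_mod_cast card_le_card (filter_subset _ _)
      _ ≤ C * (l : ℝ) ^ (ε / 6) := hreps l
      _ ≤ C * ((8 * min N₁ N₂) ^ 6) ^ (ε / 6) := by gcongr
      _ = C * 8 ^ ε * min N₁ N₂ ^ ε := by
        rw [← Real.rpow_natCast, ← Real.rpow_mul (by positivity),
          Real.mul_rpow (by norm_num) (by positivity)]
        ring_nf
      _ ≤ (C * 8 ^ ε + 2) * min N₁ N₂ ^ ε := by nlinarith
  · have hl' : min (4 * N₁) (4 * N₂) ^ 2 + 4 * min (4 * N₁) (4 * N₂) ^ 6 < l := by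
      rw [← mul_min_of_nonneg _ _ (by norm_num)]
      nlinarith [pow_le_pow_right₀ hM (show 2 ≤ 6 by norm_num)]
    calc _ ≤ (2 : ℝ) := by exact_mod_cast card_sqSumReps_filter_le_two hl'
      _ ≤ (C * 8 ^ ε + 2) * min N₁ N₂ ^ ε := by nlinarith
end
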